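/- Let G be a digraph in which every vertex has positive outdegree. Then q(G) ≤ max over arcs (v_i,v_j) of ( d_i^+·sqrt(m_i^+/d_j^+) + d_j^+·sqrt(m_j^+/d_i^+) ). -/

import Mathlib

open Matrix Finset

/-- Spectral radius of a complex square matrix: the largest modulus of its eigenvalues. -/
noncomputable def specRad {n : ℕ} (M : Matrix (Fin n) (Fin n) ℂ) : ℝ :=
  sSup {x : ℝ | ∃ μ ∈ spectrum ℂ M, x = ‖μ‖}

/-- Spectral radius of a real square matrix (via its complex eigenvalues). -/
noncomputable def specRadR {n : ℕ} (M : Matrix (Fin n) (Fin n) ℝ) : ℝ :=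
  specRad (M.map Complex.ofReal)

/-- Adjacency matrix of a digraph given by its arc relation. -/
def adjM {n : ℕ} (E : Fin n → Fin n → Prop) [DecidableRel E] :
    Matrix (Fin n) (Fin n) ℝ := fun i j => if E i j then 1 else 0

/-- Outdegree of vertex `i`. -/
def outdeg {n : ℕ} (E : Fin n → Fin n → Prop) [DecidableRel E] (i : Fin n) : ℕ :=
  (Finset.univ.filter (fun j => E i j)).card

/-- Signless Laplacian `Q(G) = D(G) + A(G)`. -/
noncomputable def Qmat {n : ℕ} (E : Fin n → Fin n → Prop) [DecidableRel E] :
    Matrix (Fin n) (Fin n) ℝ :=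
  Matrix.diagonal (fun i => (outdeg E i : ℝ)) + adjM E

/-- Signless Laplacian spectral radius `q(G)`. -/
noncomputable def qG {n : ℕ} (E : Fin n → Fin n → Prop) [DecidableRel E] : ℝ :=
  specRadR (Qmat E)

/-- Average 2-outdegree `m_i^+`. -/
noncomputable def m2 {n : ℕ} (E : Fin n → Fin n → Prop) [DecidableRel E] (i : Fin n) : ℝ :=
  (∑ j ∈ Finset.univ.filter (fun j => E i j), (outdeg E j : ℝ)) / (outdeg E i : ℝ)

/-- The finset of arcs of the digraph. -/
def arcs {n : ℕ} (E : Fin n → Fin n → Prop) [DecidableRel E] : Finset (Fin n × Fin n) :=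
  Finset.univ.filter (fun p => E p.1 p.2)

/-- Strong connectivity of a digraph. -/
def StrongConn {n : ℕ} (E : Fin n → Fin n → Prop) : Prop :=
  ∀ i j : Fin n, Relation.ReflTransGen E i j

/-- Irreducibility of a square matrix: the digraph of nonzero entries is strongly connected. -/
def MatIrred {n : ℕ} {α : Type*} [Zero α] (M : Matrix (Fin n) (Fin n) α) : Prop :=
  ∀ i j : Fin n, i ≠ j → Relation.TransGen (fun a b => M a b ≠ 0) i j

/-!
If `Q x = μ x` with `x ≠ 0`, then `z = |x|` satisfies `|μ| z_v ≤ ∑_{v → k} (z_v + z_k)` at every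
vertex. For a positive arc weight `f`, take the arc `(i, j)` maximising `(z_i + z_j) / f(i, j)`;
adding the inequalities at `i` and `j` and bounding every `z_a + z_k` by that maximal ratio gives
`|μ| f(i, j) ≤ ∑_{i → k} f(i, k) + ∑_{j → k} f(j, k)`. With `f(i, j) = √(d_i d_j)`, Cauchy–Schwarz
gives `∑_{i → k} √d_k ≤ √(d_i ∑_{i → k} d_k) = d_i √(m_i)`, and the bound becomes
`d_i √(m_i / d_j) + d_j √(m_j / d_i)`.
-/

theorem Matrix.exists_mulVec_eq_smul_of_mem_spectrum {ι K : Type*} [Fintype ι] [DecidableEq ι]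
    [Field K] {M : Matrix ι ι K} {μ : K} (hμ : μ ∈ spectrum K M) :
    ∃ x ≠ 0, M *ᵥ x = μ • x := by
  rw [← spectrum_toLin', ← Module.End.hasEigenvalue_iff_mem_spectrum] at hμ
  obtain ⟨x, hx⟩ := hμ.exists_hasEigenvector
  exact ⟨x, hx.2, Module.End.mem_eigenspace_iff.mp hx.1⟩

theorem specRad_le {n : ℕ} {M : Matrix (Fin n) (Fin n) ℂ} {c : ℝ} (hc : 0 ≤ c)
    (h : ∀ μ ∈ spectrum ℂ M, ‖μ‖ ≤ c) : specRad M ≤ c :=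
  Real.sSup_le (by rintro _ ⟨μ, hμ, rfl⟩; exact h μ hμ) hc

section WeightedArcBound

variable {V : Type*} [Fintype V] {E : V → V → Prop} [DecidableRel E]

theorem exists_arc_mul_weight_le {r : ℝ} {z : V → ℝ} {f : V → V → ℝ}
    (hf : ∀ a b, E a b → 0 < f a b) (hout : ∀ v, ∃ k, E v k)
    (hz : ∀ v, 0 ≤ z v) {v₀ : V} (hv₀ : 0 < z v₀)
    (hr : ∀ v, r * z v ≤ ∑ k with E v k, (z v + z k)) :
    ∃ i j, E i j ∧ r * f i j ≤ ∑ k with E i k, f i k + ∑ k with E j k, f j k := by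
  set A : Finset (V × V) := {p | E p.1 p.2}
  have mem_A {a b : V} (hab : E a b) : (a, b) ∈ A := by simpa [A]
  obtain ⟨k₀, hk₀⟩ := hout v₀
  obtain ⟨⟨i, j⟩, hij, hmax⟩ :=
    exists_max_image A (fun p => (z p.1 + z p.2) / f p.1 p.2) ⟨_, mem_A hk₀⟩
  replace hij : E i j := by simpa [A] using hij
  set G := (z i + z j) / f i j
  have hG {a b : V} (hab : E a b) : z a + z b ≤ G * f a b :=
    (div_le_iff₀ (hf a b hab)).1 (hmax _ (mem_A hab))
  have hG_pos : 0 < G :=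
    (div_pos (by linarith [hz k₀]) (hf _ _ hk₀)).trans_le (hmax _ (mem_A hk₀))
  have hrow (a : V) : r * z a ≤ G * ∑ k with E a k, f a k := by
    rw [mul_sum]
    exact (hr a).trans (sum_le_sum fun k hk => hG (mem_filter.1 hk).2)
  refine ⟨i, j, hij, le_of_mul_le_mul_left ?_ hG_pos⟩
  calc G * (r * f i j) = r * z i + r * z j := by
        rw [mul_left_comm, div_mul_cancel₀ _ (hf i j hij).ne', mul_add]
    _ ≤ G * (∑ k with E i k, f i k + ∑ k with E j k, f j k) := by
        rw [mul_add]; exact add_le_add (hrow i) (hrow j)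

end WeightedArcBound

section Digraph

variable {n : ℕ} (E : Fin n → Fin n → Prop) [DecidableRel E]

theorem Qmat_map_mulVec_apply (x : Fin n → ℂ) (v : Fin n) :
    ((Qmat E).map Complex.ofReal *ᵥ x) v = ∑ k with E v k, (x v + x k) := by
  simp [mulVec, dotProduct, Qmat, diagonal_apply, adjM, add_mul, sum_add_distrib, sum_filter,
    outdeg, apply_ite Complex.ofReal, ite_mul]

theorem exists_nonneg_norm_mul_le_of_mem_spectrum_Qmat {μ : ℂ}
    (hμ : μ ∈ spectrum ℂ ((Qmat E).map Complex.ofReal)) :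
    ∃ z : Fin n → ℝ, (∀ v, 0 ≤ z v) ∧ (∃ v, 0 < z v) ∧
      ∀ v, ‖μ‖ * z v ≤ ∑ k with E v k, (z v + z k) := by
  obtain ⟨x, hx0, hx⟩ := exists_mulVec_eq_smul_of_mem_spectrum hμ
  obtain ⟨v₀, hv₀⟩ := Function.ne_iff.mp hx0
  refine ⟨fun v => ‖x v‖, fun v => norm_nonneg _, ⟨v₀, norm_pos_iff.mpr hv₀⟩, fun v => ?_⟩
  calc ‖μ‖ * ‖x v‖ = ‖∑ k with E v k, (x v + x k)‖ := by
        rw [← norm_mul, ← Qmat_map_mulVec_apply, hx, Pi.smul_apply, smul_eq_mul]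
    _ ≤ ∑ k with E v k, (‖x v‖ + ‖x k‖) :=
        (norm_sum_le _ _).trans (sum_le_sum fun k _ => norm_add_le _ _)

theorem sum_sqrt_outdeg_le (i : Fin n) :
    ∑ k with E i k, √(outdeg E k : ℝ) ≤
      √(outdeg E i : ℝ) * √(∑ k with E i k, (outdeg E k : ℝ)) := by
  simpa [outdeg] using Real.sum_sqrt_mul_sqrt_le ({k | E i k} : Finset (Fin n))
    (f := fun _ => 1) (g := fun k => (outdeg E k : ℝ)) (fun _ => zero_le_one)
    (fun _ => by positivity)

variable {E} in
theorem le_arc_bound_of_mul_sqrt_outdeg_le {i j : Fin n} (hi : 0 < outdeg E i)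
    (hj : 0 < outdeg E j) {r : ℝ}
    (h : r * (√(outdeg E i : ℝ) * √(outdeg E j : ℝ)) ≤
      ∑ k with E i k, √(outdeg E i : ℝ) * √(outdeg E k : ℝ) +
      ∑ k with E j k, √(outdeg E j : ℝ) * √(outdeg E k : ℝ)) :
    r ≤ (outdeg E i : ℝ) * √(m2 E i / (outdeg E j : ℝ)) +
      (outdeg E j : ℝ) * √(m2 E j / (outdeg E i : ℝ)) := by
  rw [← mul_sum, ← mul_sum] at h
  have hCS := add_le_add
    (mul_le_mul_of_nonneg_left (sum_sqrt_outdeg_le E i) (Real.sqrt_nonneg (outdeg E i : ℝ)))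
    (mul_le_mul_of_nonneg_left (sum_sqrt_outdeg_le E j) (Real.sqrt_nonneg (outdeg E j : ℝ)))
  set a := √(outdeg E i : ℝ)
  set b := √(outdeg E j : ℝ)
  have ha : 0 < a := Real.sqrt_pos.2 (by exact_mod_cast hi)
  have hb : 0 < b := Real.sqrt_pos.2 (by exact_mod_cast hj)
  have ha2 : (outdeg E i : ℝ) = a ^ 2 := (Real.sq_sqrt (Nat.cast_nonneg _)).symm
  have hb2 : (outdeg E j : ℝ) = b ^ 2 := (Real.sq_sqrt (Nat.cast_nonneg _)).symm
  set P := ∑ k with E i k, (outdeg E k : ℝ)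
  set Q := ∑ k with E j k, (outdeg E k : ℝ)
  have hP : m2 E i / (outdeg E j : ℝ) = (√P / (a * b)) ^ 2 := by
    rw [m2, div_pow, mul_pow, Real.sq_sqrt (sum_nonneg fun _ _ => Nat.cast_nonneg _), ← ha2,
      ← hb2, div_div]
  have hQ : m2 E j / (outdeg E i : ℝ) = (√Q / (b * a)) ^ 2 := by
    rw [m2, div_pow, mul_pow, Real.sq_sqrt (sum_nonneg fun _ _ => Nat.cast_nonneg _), ← ha2,
      ← hb2, div_div]
  rw [hP, hQ, Real.sqrt_sq (by positivity), Real.sqrt_sq (by positivity), ha2, hb2]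
  rw [← le_div_iff₀ (by positivity)] at h
  refine h.trans ((div_le_div_of_nonneg_right hCS (by positivity)).trans_eq ?_)
  field_simp

end Digraph

theorem stmt_9_general {n : ℕ} (E : Fin n → Fin n → Prop) [DecidableRel E]
    (hdeg : ∀ i, 0 < outdeg E i) (harcs : (arcs E).Nonempty) :
    qG E ≤ (arcs E).sup' harcs (fun p =>
      (outdeg E p.1 : ℝ) * Real.sqrt (m2 E p.1 / (outdeg E p.2 : ℝ)) +
      (outdeg E p.2 : ℝ) * Real.sqrt (m2 E p.2 / (outdeg E p.1 : ℝ))) := by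
  obtain ⟨p₀, hp₀⟩ := harcs
  refine specRad_le ((by positivity : (0 : ℝ) ≤ _).trans (le_sup' _ hp₀)) fun μ hμ => ?_
  obtain ⟨z, hz, ⟨v₀, hv₀⟩, hμz⟩ := exists_nonneg_norm_mul_le_of_mem_spectrum_Qmat E hμ
  have hout (v : Fin n) : ∃ k, E v k := by
    simpa [outdeg, Finset.Nonempty] using card_pos.1 (hdeg v)
  obtain ⟨i, j, hij, h⟩ := exists_arc_mul_weight_le
    (f := fun a b => √(outdeg E a : ℝ) * √(outdeg E b : ℝ))
    (fun a b _ => by have := hdeg a; have := hdeg b; positivity) hout hz hv₀ hμz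
  exact le_sup'_of_le _ (by simpa [arcs] : (i, j) ∈ arcs E)
    (le_arc_bound_of_mul_sqrt_outdeg_le (hdeg i) (hdeg j) h)

/-- `q(G) ≤ max over arcs of d_i⁺√(m_i⁺/d_j⁺) + d_j⁺√(m_j⁺/d_i⁺)`. -/
theorem stmt_9 {n : ℕ} (E : Fin n → Fin n → Prop) [DecidableRel E]
    (hloop : ∀ i, ¬ E i i) (hdeg : ∀ i, 0 < outdeg E i) (harcs : (arcs E).Nonempty) :
    qG E ≤ (arcs E).sup' harcs (fun p =>
      (outdeg E p.1 : ℝ) * Real.sqrt (m2 E p.1 / (outdeg E p.2 : ℝ)) +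
      (outdeg E p.2 : ℝ) * Real.sqrt (m2 E p.2 / (outdeg E p.1 : ℝ))) :=
  stmt_9_general E hdeg harcs
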